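/- arXiv:2505.16323 — 7 statements merged into one kernel-verified Lean document; each statement's English description precedes it below -/
import Mathlib

section
/- Let G and H be commutative (additive) groups, let f : G → H be any map, and let E ⊆ G be a set that generates G as a group. If Δ_{h₁}Δ_{h₂}⋯Δ_{hₙ} f = 0 for all h₁,…,hₙ ∈ E, then Δ_{h₁}Δ_{h₂}⋯Δ_{hₙ} f = 0 for all h₁,…,hₙ ∈ G (i.e., f is a polynomial map of functional degree at most n−1). -/
/-- The forward finite difference operator: `(Δ_h f)(x) = f (x + h) - f x`. -/
def fwdDiffOp {G H : Type*} [Add G] [Sub H] (h : G) (f : G → H) : G → H :=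
  fun x => f (x + h) - f x

lemma fwdDiffOp_comm {G H : Type*} [AddCommGroup G] [AddCommGroup H] (a b : G) (f : G → H) :
    fwdDiffOp a (fwdDiffOp b f) = fwdDiffOp b (fwdDiffOp a f) := by
  funext x
  simp only [fwdDiffOp]
  rw [add_right_comm x b a]
  abel

lemma fwdDiffOp_foldr {G H : Type*} [AddCommGroup G] [AddCommGroup H] (a : G) (l : List G)
    (f : G → H) : fwdDiffOp a (l.foldr fwdDiffOp f) = l.foldr fwdDiffOp (fwdDiffOp a f) := by
  induction l with
  | nil => rfl
  | cons b t ih => simp only [List.foldr_cons, fwdDiffOp_comm a b, ih]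

lemma montel_list {G H : Type*} [AddCommGroup G] [AddCommGroup H]
    (f : G → H) (E : Set G) (hE : AddSubgroup.closure E = ⊤) (n : ℕ)
    (hyp : ∀ l : List G, l.length = n → (∀ x ∈ l, x ∈ E) → l.foldr fwdDiffOp f = 0) :
    ∀ l₁ l₂ : List G, l₁.length + l₂.length = n → (∀ x ∈ l₂, x ∈ E) →
      (l₁ ++ l₂).foldr fwdDiffOp f = 0 := by
  intro l₁
  induction l₁ with
  | nil => intro l₂ hlen hmem; exact hyp l₂ (by simpa using hlen) hmem
  | cons a t ih =>
    intro l₂ hlen hmem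
    set Q : G → H := (t ++ l₂).foldr fwdDiffOp f with hQ
    have hper : ∀ g ∈ AddSubgroup.closure E, ∀ x, Q (x + g) = Q x := by
      intro g hg
      refine AddSubgroup.closure_induction ?_ ?_ ?_ ?_ hg
      · intro e he x
        have h0 : (t ++ (e :: l₂)).foldr fwdDiffOp f = 0 := by
          apply ih
          · simp only [List.length_cons] at hlen ⊢; omega
          · intro y hy
            rcases List.mem_cons.mp hy with rfl | hy
            · exact he
            · exact hmem y hy
        have h1 : fwdDiffOp e Q = 0 := by
          rw [hQ, List.foldr_append, fwdDiffOp_foldr]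
          simpa [List.foldr_append] using h0
        have := congrFun h1 x
        simp only [fwdDiffOp, Pi.zero_apply] at this
        exact sub_eq_zero.mp this
      · intro x; rw [add_zero]
      · intro g₁ g₂ _ _ h1 h2 x
        rw [← add_assoc, h2, h1]
      · intro g _ h1 x
        have := h1 (x + -g)
        rw [add_assoc, neg_add_cancel, add_zero] at this
        exact this.symm
    have ha : ∀ x, Q (x + a) = Q x := hper a (by rw [hE]; trivial)
    funext x
    simp only [List.cons_append, List.foldr_cons, fwdDiffOp, Pi.zero_apply, ← hQ]
    rw [ha x, sub_self]

/-- Montel-type theorem for mixed differences (algebraic case): if all iterated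
differences of order `n` with steps in a generating set `E` of `G` vanish, then
all iterated differences of order `n` with arbitrary steps in `G` vanish. -/
theorem montel_mixed_differences {G H : Type*} [AddCommGroup G] [AddCommGroup H]
    (f : G → H) (E : Set G) (hE : AddSubgroup.closure E = ⊤) (n : ℕ)
    (hyp : ∀ h : Fin n → G, (∀ i, h i ∈ E) → (List.ofFn h).foldr fwdDiffOp f = 0) :
    ∀ h : Fin n → G, (List.ofFn h).foldr fwdDiffOp f = 0 := by
  intro h
  have key := montel_list f E hE n ?_ (List.ofFn h) [] (by simp) (by simp)
  · simpa using key
  · intro l hlen hmem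
    have heq : List.ofFn (fun i : Fin n => l.get (Fin.cast hlen.symm i)) = l := by
      subst hlen; simp [List.ofFn_get]
    have := hyp (fun i => l.get (Fin.cast hlen.symm i)) (fun i => hmem _ (l.get_mem _))
    rwa [heq] at this
end

section
/- Let f : ℝ^d → ℝ be continuous, let z₀ ∈ ℝ^d, δ > 0, and let q(z) = a₀ + a₁z + ⋯ + aₙzⁿ be a real polynomial with a₀ ≠ 0. If Σ_{k=0}^{n} a_k f(x + k y) = 0 for all x ∈ ℝ^d and all y ∈ ℝ^d with ‖y − z₀‖ ≤ δ, then f is an ordinary polynomial in d real variables of total degree at most n−1. -/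
open Finset MeasureTheory Convolution Metric Function

lemma oneD (n : ℕ) (φ : ℝ → ℝ) (hφ : ContDiff ℝ (⊤ : ℕ∞) φ)
    (h : ∀ t, iteratedDeriv n φ t = 0) (t : ℝ) :
    φ t = ∑ m ∈ Finset.range n, t ^ m / (Nat.factorial m : ℝ) * iteratedDeriv m φ 0 := by
  induction n generalizing φ t with
  | zero => simpa using h t
  | succ n IH =>
    have hφ' : ContDiff ℝ (⊤ : ℕ∞) (deriv φ) := (contDiff_infty_iff_deriv.mp hφ).2
    have hd : ∀ t, iteratedDeriv n (deriv φ) t = 0 := by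
      intro t; rw [← iteratedDeriv_succ']; exact h t
    have key : ∀ s : ℝ, deriv φ s = ∑ m ∈ Finset.range n, s ^ m / (Nat.factorial m : ℝ) * iteratedDeriv m (deriv φ) 0 := fun s => IH (deriv φ) hφ' hd s
    set c : ℕ → ℝ := fun m => iteratedDeriv m φ 0 / (Nat.factorial m : ℝ) with hc
    have hS : ∀ s : ℝ, HasDerivAt (fun u : ℝ => ∑ m ∈ Finset.range (n+1),
        u ^ m / (Nat.factorial m : ℝ) * iteratedDeriv m φ 0)
        (deriv φ s) s := by
      intro s
      have h1 : HasDerivAt (fun u : ℝ => ∑ m ∈ Finset.range (n+1),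
          u ^ m / (Nat.factorial m : ℝ) * iteratedDeriv m φ 0)
          (∑ m ∈ Finset.range (n+1),
            (m : ℝ) * s ^ (m - 1) / (Nat.factorial m : ℝ) * iteratedDeriv m φ 0) s := by
        apply HasDerivAt.fun_sum
        intro m _
        have := (hasDerivAt_pow m s).div_const (Nat.factorial m : ℝ)
        exact this.mul_const _
      convert h1 using 1
      rw [Finset.sum_range_succ']
      simp only [Nat.cast_zero, zero_mul, zero_div, zero_mul, add_zero]
      rw [key s]
      apply Finset.sum_congr rfl
      intro m _
      rw [← iteratedDeriv_succ']
      have hfac : (Nat.factorial (m+1) : ℝ) = (m+1 : ℝ) * (Nat.factorial m : ℝ) := by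
        rw [Nat.factorial_succ]; push_cast; ring
      have hne : (Nat.factorial m : ℝ) ≠ 0 := Nat.cast_ne_zero.mpr (Nat.factorial_ne_zero m)
      have hne1 : (m + 1 : ℝ) ≠ 0 := by positivity
      field_simp [hfac]
      rw [Nat.add_sub_cancel, hfac]
      push_cast
      ring
    set Φ : ℝ → ℝ := fun u => φ u - ∑ m ∈ Finset.range (n+1),
        u ^ m / (Nat.factorial m : ℝ) * iteratedDeriv m φ 0 with hΦ
    have hΦd : ∀ s, HasDerivAt Φ 0 s := by
      intro s
      have := (hφ.differentiable (by simp) s).hasDerivAt.sub (hS s)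
      rw [sub_self] at this
      exact this
    have hconst : Φ t = Φ 0 :=
      is_const_of_deriv_eq_zero (fun s => (hΦd s).differentiableAt)
        (fun s => (hΦd s).deriv) t 0
    have hΦ0 : Φ 0 = 0 := by
      simp only [hΦ]
      rw [Finset.sum_range_succ']
      simp
    have := hconst.trans hΦ0
    simpa [hΦ, sub_eq_zero] using this

/-- Vandermonde elimination. -/
lemma vdm (N : ℕ) (w : Fin (N+1) → ℝ)
    (h : ∀ j : Fin (N+1), ∑ k : Fin (N+1), ((k : ℕ) : ℝ) ^ (j : ℕ) * w k = 0) :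
    w = 0 := by
  have hdet : (Matrix.vandermonde (fun k : Fin (N+1) => ((k : ℕ) : ℝ))).det ≠ 0 := by
    rw [Ne, Matrix.det_vandermonde_eq_zero_iff]
    rintro ⟨i, j, hij, hne⟩
    exact hne (Fin.ext (Nat.cast_injective hij))
  apply Matrix.eq_zero_of_vecMul_eq_zero hdet
  funext j
  have := h j
  simp only [Matrix.vecMul, dotProduct, Matrix.vandermonde, Matrix.of_apply,
    Pi.zero_apply]
  rw [← this]
  exact Finset.sum_congr rfl fun k _ => mul_comm _ _

lemma expand {d m : ℕ} (M : ContinuousMultilinearMap ℝ (fun _ : Fin m => EuclideanSpace ℝ (Fin d)) ℝ)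
    (x : EuclideanSpace ℝ (Fin d)) :
    M (fun _ => x) = ∑ i : Fin m → Fin d, (∏ j, x (i j)) *
      M (fun j => EuclideanSpace.single (i j) (1:ℝ)) := by
  have hx1 := ((EuclideanSpace.basisFun (Fin d) ℝ).sum_repr x).symm
  simp only [EuclideanSpace.basisFun_apply, EuclideanSpace.basisFun_repr] at hx1
  have hx : (fun _ : Fin m => x) =
      fun _ => ∑ l : Fin d, x l • EuclideanSpace.single l (1:ℝ) := funext fun _ => hx1
  rw [hx]
  have h2 : (M.toMultilinearMap fun _ : Fin m => ∑ l : Fin d, x l • EuclideanSpace.single l (1:ℝ))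
      = ∑ i : Fin m → Fin d, M.toMultilinearMap fun j => x (i j) • EuclideanSpace.single (i j) (1:ℝ) :=
    M.toMultilinearMap.map_sum (fun (_ : Fin m) (l : Fin d) => x l • EuclideanSpace.single l (1:ℝ))
  rw [show (M fun _ : Fin m => ∑ l : Fin d, x l • EuclideanSpace.single l (1:ℝ))
      = M.toMultilinearMap fun _ : Fin m => ∑ l : Fin d, x l • EuclideanSpace.single l (1:ℝ) from rfl,
    h2]
  apply Finset.sum_congr rfl
  intro i _
  have := M.toMultilinearMap.map_smul_univ (fun j => x (i j))
    (fun j => EuclideanSpace.single (i j) (1:ℝ))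
  simpa [smul_eq_mul] using this

lemma smooth_step {d n : ℕ} (f : EuclideanSpace ℝ (Fin d) → ℝ) (hf : Continuous f)
    (z₀ : EuclideanSpace ℝ (Fin d)) (δ : ℝ) (hδ : 0 < δ) (a : ℕ → ℝ) (ha : a 0 ≠ 0)
    (hyp : ∀ x y : EuclideanSpace ℝ (Fin d), ‖y - z₀‖ ≤ δ →
      ∑ k ∈ Finset.range (n + 1), a k * f (x + ((k : ℕ) : ℝ) • y) = 0) :
    ContDiff ℝ (⊤ : ℕ∞) f := by
  classical
  obtain ⟨φb, hrOut⟩ : ∃ φb : ContDiffBump z₀, φb.rOut = δ :=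
    ⟨⟨δ/2, δ, by positivity, by linarith⟩, rfl⟩
  set φ : EuclideanSpace ℝ (Fin d) → ℝ := φb.normed volume with hφ
  have hφc : Continuous φ := φb.continuous_normed
  have hφs : HasCompactSupport φ := φb.hasCompactSupport_normed
  have hφint : ∫ y, φ y = 1 := φb.integral_normed
  have hφ0 : ∀ y : EuclideanSpace ℝ (Fin d), ¬ (‖y - z₀‖ ≤ δ) → φ y = 0 := by
    intro y hy
    rw [not_le] at hy
    apply notMem_support.mp
    rw [hφ, φb.support_normed_eq]
    intro hmem
    rw [mem_ball_iff_norm, hrOut] at hmem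
    linarith
  set ψ : ℕ → EuclideanSpace ℝ (Fin d) → ℝ :=
    fun k t => (((k:ℝ))^d)⁻¹ * φ ((-(k:ℝ)⁻¹) • t) with hψ
  have hψs : ∀ k : ℕ, 0 < k → HasCompactSupport (ψ k) := by
    intro k hk
    have hne : (-(k:ℝ)⁻¹) ≠ 0 := by
      simp only [neg_ne_zero, ne_eq, inv_eq_zero, Nat.cast_eq_zero]
      omega
    have h1 : HasCompactSupport fun t : EuclideanSpace ℝ (Fin d) => φ ((-(k:ℝ)⁻¹) • t) :=
      hφs.comp_smul hne
    exact h1.mul_left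
  have hψsm : ∀ k : ℕ, ContDiff ℝ (⊤ : ℕ∞) (ψ k) := by
    intro k
    exact contDiff_const.mul (φb.contDiff_normed.comp (contDiff_id.const_smul _))
  set g : ℕ → EuclideanSpace ℝ (Fin d) → ℝ :=
    fun k => (ψ k) ⋆[ContinuousLinearMap.mul ℝ ℝ, volume] f with hg
  have hgsm : ∀ k : ℕ, 0 < k → ContDiff ℝ (⊤ : ℕ∞) (g k) := by
    intro k hk
    exact HasCompactSupport.contDiff_convolution_left _ (hψs k hk) (hψsm k)
      (hf.locallyIntegrable)
  have hgk : ∀ (k : ℕ), 0 < k → ∀ x, g k x = ∫ y, φ y * f (x + (k:ℝ) • y) := by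
    intro k hk x
    have hkR : (0:ℝ) < (k:ℝ) := by exact_mod_cast hk
    have hkne : (k:ℝ) ≠ 0 := ne_of_gt hkR
    have hcv : g k x = ∫ t, ψ k t * f (x - t) := by
      rw [hg]
      show (ψ k ⋆[ContinuousLinearMap.mul ℝ ℝ, volume] f) x = _
      rw [convolution_def]
      simp only [ContinuousLinearMap.mul_apply']
    have hsub := MeasureTheory.Measure.integral_comp_smul
      (volume : Measure (EuclideanSpace ℝ (Fin d)))
      (fun t => ψ k t * f (x - t)) (-(k:ℝ))
    have hDE : Module.finrank ℝ (EuclideanSpace ℝ (Fin d)) = d := finrank_euclideanSpace_fin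
    have habs : |(((-(k:ℝ)) ^ Module.finrank ℝ (EuclideanSpace ℝ (Fin d))))⁻¹|
        = ((k:ℝ)^d)⁻¹ := by
      rw [hDE, abs_inv, abs_pow, abs_neg, abs_of_pos hkR]
    rw [habs] at hsub
    have heval : ∀ y : EuclideanSpace ℝ (Fin d), ψ k ((-(k:ℝ)) • y) * f (x - (-(k:ℝ)) • y)
        = ((k:ℝ)^d)⁻¹ * (φ y * f (x + (k:ℝ) • y)) := by
      intro y
      have h1 : (-(k:ℝ)⁻¹) • ((-(k:ℝ)) • y) = y := by
        rw [smul_smul, show (-(k:ℝ)⁻¹) * (-(k:ℝ)) = (k:ℝ)⁻¹ * (k:ℝ) by ring,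
          inv_mul_cancel₀ hkne, one_smul]
      have h2 : x - (-(k:ℝ)) • y = x + (k:ℝ) • y := by
        rw [neg_smul, sub_neg_eq_add]
      rw [hψ]
      simp only [h1, h2]
      ring
    rw [hcv]
    rw [show (∫ y, ψ k ((-(k:ℝ)) • y) * f (x - (-(k:ℝ)) • y))
        = ∫ y, ((k:ℝ)^d)⁻¹ * (φ y * f (x + (k:ℝ) • y)) by
      congr 1; funext y; exact heval y] at hsub
    rw [MeasureTheory.integral_const_mul, smul_eq_mul] at hsub
    have hpow : ((k:ℝ)^d)⁻¹ ≠ 0 := by positivity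
    exact (mul_left_cancel₀ hpow hsub).symm
  -- the key averaged identity
  have key : ∀ x, a 0 * f x + ∑ k ∈ Finset.range n, a (k+1) * g (k+1) x = 0 := by
    intro x
    have hintk : ∀ k : ℕ, Integrable (fun y => φ y * (a k * f (x + (k:ℝ) • y))) volume := by
      intro k
      apply Continuous.integrable_of_hasCompactSupport
      · exact hφc.mul (continuous_const.mul (hf.comp
          (continuous_const.add (continuous_const_smul _))))
      · exact hφs.mul_right
    have h1 : ∀ y : EuclideanSpace ℝ (Fin d),
        ∑ k ∈ Finset.range (n+1), φ y * (a k * f (x + (k:ℝ) • y)) = 0 := by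
      intro y
      rw [← Finset.mul_sum]
      by_cases hy : ‖y - z₀‖ ≤ δ
      · rw [hyp x y hy, mul_zero]
      · rw [hφ0 y hy, zero_mul]
    have h2 : ∑ k ∈ Finset.range (n+1), ∫ y, φ y * (a k * f (x + (k:ℝ) • y)) = 0 := by
      rw [← integral_finset_sum _ (fun k _ => hintk k)]
      simp only [h1, integral_zero]
    have h3 : ∀ k : ℕ, (∫ y, φ y * (a k * f (x + (k:ℝ) • y)))
        = a k * ∫ y, φ y * f (x + (k:ℝ) • y) := by
      intro k
      rw [← MeasureTheory.integral_const_mul]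
      congr 1; funext y; ring
    rw [show (∑ k ∈ Finset.range (n+1), ∫ y, φ y * (a k * f (x + (k:ℝ) • y)))
        = ∑ k ∈ Finset.range (n+1), a k * ∫ y, φ y * f (x + (k:ℝ) • y) from
      Finset.sum_congr rfl fun k _ => h3 k] at h2
    rw [Finset.sum_range_succ'] at h2
    have h00 : (∫ y, φ y * f (x + ((0:ℕ):ℝ) • y)) = f x := by
      simp only [Nat.cast_zero, zero_smul, add_zero]
      rw [MeasureTheory.integral_mul_const, hφint, one_mul]
    rw [h00] at h2
    rw [show (∑ k ∈ Finset.range n, a (k+1) * ∫ y, φ y * f (x + ((k+1 : ℕ):ℝ) • y))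
        = ∑ k ∈ Finset.range n, a (k+1) * g (k+1) x from
      Finset.sum_congr rfl fun k _ => by rw [hgk (k+1) k.succ_pos]] at h2
    linarith [h2]
  have hrepr : f = fun x => (-(a 0)⁻¹) * ∑ k ∈ Finset.range n, a (k+1) * g (k+1) x := by
    funext x
    have h := key x
    field_simp
    linarith [h]
  rw [hrepr]
  exact contDiff_const.mul (ContDiff.sum fun k _ => contDiff_const.mul (hgsm (k+1) k.succ_pos))

variable {d n : ℕ}

lemma stepGood (z₀ : EuclideanSpace ℝ (Fin d)) (δ : ℝ) (a : ℕ → ℝ)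
    {g : EuclideanSpace ℝ (Fin d) → ℝ} (hg : ContDiff ℝ (⊤ : ℕ∞) g) {m : ℕ}
    (hgood : ∀ j ≤ m, ∀ x y : EuclideanSpace ℝ (Fin d), ‖y - z₀‖ < δ →
      ∑ k ∈ Finset.range (n+1), a k * ((k:ℝ))^j * g (x + (k:ℝ) • y) = 0)
    (v : EuclideanSpace ℝ (Fin d)) :
    ∀ j ≤ m + 1, ∀ x y : EuclideanSpace ℝ (Fin d), ‖y - z₀‖ < δ →
      ∑ k ∈ Finset.range (n+1), a k * ((k:ℝ))^j * (fderiv ℝ g (x + (k:ℝ) • y) v) = 0 := by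
  have hdiff : Differentiable ℝ g := hg.differentiable (by simp)
  intro j hj x y hy
  by_cases hjm : j ≤ m
  · -- differentiate the identity in x
    have hF : ∀ x' : EuclideanSpace ℝ (Fin d), HasFDerivAt
        (fun x'' => ∑ k ∈ Finset.range (n+1), a k * (k:ℝ)^j * g (x'' + (k:ℝ) • y))
        (∑ k ∈ Finset.range (n+1),
          (a k * (k:ℝ)^j) • fderiv ℝ g (x' + (k:ℝ) • y)) x' := by
      intro x'
      apply HasFDerivAt.fun_sum
      intro k _
      have h1 : HasFDerivAt (fun x'' : EuclideanSpace ℝ (Fin d) => x'' + (k:ℝ) • y)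
          (ContinuousLinearMap.id ℝ _) x' := (hasFDerivAt_id x').add_const _
      have h2 := ((hdiff (x' + (k:ℝ) • y)).hasFDerivAt).comp x' h1
      rw [ContinuousLinearMap.comp_id] at h2
      exact h2.const_mul _
    have hzero : (fun x'' => ∑ k ∈ Finset.range (n+1),
        a k * (k:ℝ)^j * g (x'' + (k:ℝ) • y)) = fun _ => (0:ℝ) :=
      funext fun x'' => hgood j hjm x'' y hy
    have h0 : (∑ k ∈ Finset.range (n+1),
        (a k * (k:ℝ)^j) • fderiv ℝ g (x + (k:ℝ) • y)) = 0 := by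
      have hx := hF x
      rw [hzero] at hx
      exact hx.unique (hasFDerivAt_const 0 x)
    have happ := congrArg (fun L : EuclideanSpace ℝ (Fin d) →L[ℝ] ℝ => L v) h0
    simpa [ContinuousLinearMap.sum_apply, mul_assoc] using happ
  · -- j = m + 1 : differentiate the m-th identity in y
    have hjeq : j = m + 1 := by omega
    subst hjeq
    have hF : HasFDerivAt
        (fun y' => ∑ k ∈ Finset.range (n+1), a k * (k:ℝ)^m * g (x + (k:ℝ) • y'))
        (∑ k ∈ Finset.range (n+1), (a k * (k:ℝ)^m) •
          ((fderiv ℝ g (x + (k:ℝ) • y)).comp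
            ((k:ℝ) • ContinuousLinearMap.id ℝ (EuclideanSpace ℝ (Fin d))))) y := by
      apply HasFDerivAt.fun_sum
      intro k _
      have h1 : HasFDerivAt (fun y' : EuclideanSpace ℝ (Fin d) => x + (k:ℝ) • y')
          ((k:ℝ) • ContinuousLinearMap.id ℝ _) y :=
        ((hasFDerivAt_id y).const_smul (k:ℝ)).const_add x
      have h2 := ((hdiff (x + (k:ℝ) • y)).hasFDerivAt).comp y h1
      exact h2.const_mul _
    have heq : (fun y' => ∑ k ∈ Finset.range (n+1), a k * (k:ℝ)^m * g (x + (k:ℝ) • y'))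
        =ᶠ[nhds y] fun _ => (0:ℝ) := by
      have hmem : Metric.ball z₀ δ ∈ nhds y :=
        (Metric.isOpen_ball).mem_nhds (mem_ball_iff_norm.mpr hy)
      filter_upwards [hmem] with y' hy'
      exact hgood m le_rfl x y' (mem_ball_iff_norm.mp hy')
    have hF0 := hF.congr_of_eventuallyEq heq.symm
    have h0 := hF0.unique (hasFDerivAt_const 0 y)
    have happ := congrArg (fun L : EuclideanSpace ℝ (Fin d) →L[ℝ] ℝ => L v) h0
    simp only [ContinuousLinearMap.sum_apply, ContinuousLinearMap.smul_apply,
      ContinuousLinearMap.coe_comp', Function.comp_apply, ContinuousLinearMap.coe_smul',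
      Pi.smul_apply, ContinuousLinearMap.coe_id', id_eq, ContinuousLinearMap.zero_apply,
      smul_eq_mul] at happ
    rw [← happ]
    apply Finset.sum_congr rfl
    intro k _
    rw [(fderiv ℝ g (x + (k:ℝ) • y)).map_smul]
    simp only [smul_eq_mul]
    ring

lemma vanish (z₀ : EuclideanSpace ℝ (Fin d)) (δ : ℝ) (hδ : 0 < δ) (a : ℕ → ℝ) (ha : a 0 ≠ 0) :
    ∀ (m j : ℕ), m + j = n → ∀ g : EuclideanSpace ℝ (Fin d) → ℝ, ContDiff ℝ (⊤ : ℕ∞) g →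
    (∀ i ≤ j, ∀ x y : EuclideanSpace ℝ (Fin d), ‖y - z₀‖ < δ →
      ∑ k ∈ Finset.range (n+1), a k * ((k:ℝ))^i * g (x + (k:ℝ) • y) = 0) →
    ∀ (v : Fin m → EuclideanSpace ℝ (Fin d)) (z : EuclideanSpace ℝ (Fin d)),
      iteratedFDeriv ℝ m g z v = 0 := by
  intro m
  induction m with
  | zero =>
    intro j hj g hg hgood v z
    have hjn : j = n := by omega
    have hz₀ : ‖z₀ - z₀‖ < δ := by simpa using hδ
    have hgz : g z = 0 := by
      have hvdm := vdm n (fun k : Fin (n+1) => a k * g (z + ((k : ℕ):ℝ) • z₀)) ?_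
      · have h0 := congrFun hvdm 0
        simp only [Fin.val_zero, Nat.cast_zero, zero_smul, add_zero, Pi.zero_apply] at h0
        exact (mul_eq_zero.mp h0).resolve_left ha
      · intro jj
        have := hgood (jj : ℕ) (by have := jj.isLt; omega : (jj:ℕ) ≤ j) z z₀ hz₀
        rw [Finset.sum_range fun k => a k * ((k:ℝ))^(jj:ℕ) * g (z + (k:ℝ) • z₀)] at this
        rw [← this]
        apply Finset.sum_congr rfl
        intro k _
        ring
    simpa [iteratedFDeriv_zero_apply] using hgz
  | succ m IH =>
    intro j hj g hg hgood v z
    have hfd : ContDiff ℝ (⊤ : ℕ∞) (fderiv ℝ g) := hg.fderiv_right (by exact_mod_cast le_top)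
    rw [iteratedFDeriv_succ_apply_right]
    rw [← iteratedFDeriv_clm_apply_const_apply hfd (by exact_mod_cast le_top)]
    have hg' : ContDiff ℝ (⊤ : ℕ∞) (fun y => fderiv ℝ g y (v (Fin.last m))) :=
      hfd.clm_apply contDiff_const
    exact IH (j+1) (by omega) _ hg'
      (stepGood z₀ δ a hg (fun i hi => hgood i (by omega)) (v (Fin.last m)))
      (Fin.init v) z

lemma taylor_repr {d n : ℕ} (f : EuclideanSpace ℝ (Fin d) → ℝ) (hf : ContDiff ℝ (⊤ : ℕ∞) f)
    (hzero : ∀ (z : EuclideanSpace ℝ (Fin d)) (v : Fin n → EuclideanSpace ℝ (Fin d)),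
      iteratedFDeriv ℝ n f z v = 0) (x : EuclideanSpace ℝ (Fin d)) :
    f x = ∑ m ∈ Finset.range n, ((Nat.factorial m : ℝ))⁻¹ *
      iteratedFDeriv ℝ m f 0 (fun _ => x) := by
  set φ : ℝ → ℝ := fun t => f (t • x) with hφ
  have hline : ContDiff ℝ (⊤:ℕ∞) (fun t : ℝ => t • x) := contDiff_id.smul contDiff_const
  have hφsm : ContDiff ℝ (⊤:ℕ∞) φ := hf.comp hline
  have hiter : ∀ m : ℕ, ∀ t : ℝ,
      iteratedDeriv m φ t = iteratedFDeriv ℝ m f (t • x) (fun _ => x) := by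
    intro m
    induction m with
    | zero =>
      intro t
      simp [iteratedDeriv_zero, hφ, iteratedFDeriv_zero_apply]
    | succ m IH =>
      intro t
      rw [iteratedDeriv_succ]
      have hrw : iteratedDeriv m φ = fun s => iteratedFDeriv ℝ m f (s • x) (fun _ => x) :=
        funext IH
      rw [hrw]
      have hdiffG : Differentiable ℝ (iteratedFDeriv ℝ m f) :=
        hf.differentiable_iteratedFDeriv (by exact_mod_cast WithTop.coe_lt_top _)
      have hline' : HasDerivAt (fun s : ℝ => s • x) x t := by
        simpa using (hasDerivAt_id t).smul_const x
      have h1 : HasDerivAt (fun s : ℝ => iteratedFDeriv ℝ m f (s • x))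
          (fderiv ℝ (iteratedFDeriv ℝ m f) (t • x) x) t :=
        ((hdiffG (t • x)).hasFDerivAt).comp_hasDerivAt t hline'
      have h2 := ((ContinuousMultilinearMap.apply ℝ
        (fun _ : Fin m => EuclideanSpace ℝ (Fin d)) ℝ
        (fun _ => x)).hasFDerivAt).comp_hasDerivAt t h1
      have h3 : (ContinuousMultilinearMap.apply ℝ (fun _ : Fin m => EuclideanSpace ℝ (Fin d)) ℝ
            (fun _ => x)) (fderiv ℝ (iteratedFDeriv ℝ m f) (t • x) x)
          = iteratedFDeriv ℝ (m+1) f (t • x) (fun _ => x) := by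
        rw [iteratedFDeriv_succ_apply_left]
        rfl
      rw [← h3]
      exact h2.deriv
  have hn : ∀ t, iteratedDeriv n φ t = 0 := fun t => (hiter n t).trans (hzero _ _)
  have h1 := oneD n φ hφsm hn 1
  have hφ1 : φ 1 = f x := by rw [hφ]; simp
  rw [hφ1] at h1
  rw [h1]
  apply Finset.sum_congr rfl
  intro m _
  rw [hiter m 0]
  simp [one_div]


/-- Generalization of Fréchet's theorem: if `f : ℝ^d → ℝ` is continuous and
`q(τ_y) f = 0` for all `y` in a closed ball of radius `δ > 0` around `z₀`, where
`q(z) = a₀ + a₁ z + ⋯ + aₙ zⁿ` with `a₀ ≠ 0`, then `f` is an ordinary polynomial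
in `d` real variables of total degree at most `n - 1`. -/
theorem frechet_generalization {d n : ℕ}
    (f : EuclideanSpace ℝ (Fin d) → ℝ) (hf : Continuous f)
    (z₀ : EuclideanSpace ℝ (Fin d)) (δ : ℝ) (hδ : 0 < δ)
    (a : ℕ → ℝ) (ha : a 0 ≠ 0)
    (hyp : ∀ x y : EuclideanSpace ℝ (Fin d), ‖y - z₀‖ ≤ δ →
      ∑ k ∈ Finset.range (n + 1), a k * f (x + k • y) = 0) :
    ∃ p : MvPolynomial (Fin d) ℝ, p.totalDegree ≤ n - 1 ∧
      ∀ x, f x = MvPolynomial.eval (fun i => x i) p := by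
  classical
  have hyp' : ∀ x y : EuclideanSpace ℝ (Fin d), ‖y - z₀‖ ≤ δ →
      ∑ k ∈ Finset.range (n+1), a k * f (x + ((k:ℕ):ℝ) • y) = 0 := by
    intro x y hy
    have h := hyp x y hy
    rw [← h]
    apply Finset.sum_congr rfl
    intro k _
    rw [Nat.cast_smul_eq_nsmul]
  have hsm := smooth_step f hf z₀ δ hδ a ha hyp'
  have hgood0 : ∀ i ≤ 0, ∀ x y : EuclideanSpace ℝ (Fin d), ‖y - z₀‖ < δ →
      ∑ k ∈ Finset.range (n+1), a k * ((k:ℝ))^i * f (x + (k:ℝ) • y) = 0 := by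
    intro i hi x y hy
    have hi0 : i = 0 := Nat.le_zero.mp hi
    subst hi0
    have := hyp' x y (le_of_lt hy)
    rw [← this]
    apply Finset.sum_congr rfl
    intro k _
    ring
  have hzero : ∀ (z : EuclideanSpace ℝ (Fin d)) (v : Fin n → EuclideanSpace ℝ (Fin d)),
      iteratedFDeriv ℝ n f z v = 0 :=
    fun z v => vanish z₀ δ hδ a ha n 0 (by omega) f hsm hgood0 v z
  have htay := taylor_repr f hsm hzero
  refine ⟨∑ m ∈ Finset.range n, ∑ i : Fin m → Fin d,
    MvPolynomial.C (((Nat.factorial m : ℝ))⁻¹ *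
      iteratedFDeriv ℝ m f 0 (fun j => EuclideanSpace.single (i j) (1:ℝ))) *
      ∏ j, MvPolynomial.X (i j), ?_, ?_⟩
  · refine le_trans (MvPolynomial.totalDegree_finset_sum _ _) ?_
    apply Finset.sup_le
    intro m hm
    refine le_trans (MvPolynomial.totalDegree_finset_sum _ _) ?_
    apply Finset.sup_le
    intro i _
    refine le_trans (MvPolynomial.totalDegree_mul _ _) ?_
    rw [MvPolynomial.totalDegree_C, zero_add]
    refine le_trans (MvPolynomial.totalDegree_finset_prod _ _) ?_
    have hX : ∀ j : Fin m, (MvPolynomial.X (i j) : MvPolynomial (Fin d) ℝ).totalDegree = 1 :=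
      fun j => MvPolynomial.totalDegree_X _
    rw [Finset.sum_congr rfl fun j _ => hX j]
    simp only [Finset.sum_const, Finset.card_univ, Fintype.card_fin, smul_eq_mul, mul_one]
    have hmn : m < n := Finset.mem_range.mp hm
    omega
  · intro x
    rw [htay x, map_sum]
    apply Finset.sum_congr rfl
    intro m hm
    rw [expand (iteratedFDeriv ℝ m f 0) x, Finset.mul_sum, map_sum]
    apply Finset.sum_congr rfl
    intro i _
    rw [map_mul, MvPolynomial.eval_C, map_prod]
    simp only [MvPolynomial.eval_X]
    ring
end

section
/- Let 𝕂 be any field, V a 𝕂-vector space of finite dimension n, and T, S : V → V commuting linear operators (TS = ST). Then the eigenvalues of T, S and TS in the algebraic closure of 𝕂 (i.e., the roots of their characteristic polynomials counted with multiplicity) can be arranged as λ₁(T),…,λₙ(T), λ₁(S),…,λₙ(S), λ₁(TS),…,λₙ(TS) so that λᵢ(TS) = λᵢ(T)·λᵢ(S) for i = 1,…,n. -/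
open Polynomial Module Set TensorProduct

set_option maxHeartbeats 1000000

section Shift

variable {K : Type*} [Field K]

lemma aux_matrix_charpoly_sub_smul_one {n : Type*} [DecidableEq n] [Fintype n]
    (M : Matrix n n K) (c : K) :
    (M - c • 1).charpoly = M.charpoly.comp (X + C c) := by
  have h : Matrix.charmatrix (M - c • (1 : Matrix n n K))
      = (Matrix.charmatrix M).map (eval₂RingHom C (X + C c) : K[X] →+* K[X]) := by
    ext i j
    by_cases hij : i = j
    · subst hij
      simp only [Matrix.charmatrix_apply_eq, Matrix.map_apply, Matrix.sub_apply,
        Matrix.smul_apply, Matrix.one_apply_eq, smul_eq_mul, mul_one,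
        coe_eval₂RingHom, eval₂_sub, eval₂_X, eval₂_C]
      push_cast [map_sub]
      ring_nf
    · rw [Matrix.charmatrix_apply_ne _ _ _ hij, Matrix.map_apply,
        Matrix.charmatrix_apply_ne _ _ _ hij]
      simp [Matrix.one_apply_ne hij]
  rw [Matrix.charpoly, Matrix.charpoly, h]
  have h2 : (Matrix.charmatrix M).map ⇑(eval₂RingHom C (X + C c) : K[X] →+* K[X])
      = (eval₂RingHom C (X + C c) : K[X] →+* K[X]).mapMatrix (Matrix.charmatrix M) := rfl
  rw [h2, ← RingHom.map_det]
  rfl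

lemma aux_charpoly_sub_algebraMap {V : Type*} [AddCommGroup V] [Module K V]
    [FiniteDimensional K V] (f : Module.End K V) (c : K) :
    (f - algebraMap K (Module.End K V) c).charpoly = f.charpoly.comp (X + C c) := by
  let b := Module.Free.chooseBasis K V
  rw [← LinearMap.charpoly_toMatrix f b, ← LinearMap.charpoly_toMatrix _ b]
  have h : LinearMap.toMatrix b b (f - algebraMap K (Module.End K V) c)
      = LinearMap.toMatrix b b f - c • 1 := by
    rw [map_sub, Module.algebraMap_end_eq_smul_id, map_smul, LinearMap.toMatrix_id]
  rw [h, aux_matrix_charpoly_sub_smul_one]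

lemma aux_charpoly_of_isNilpotent_sub {V : Type*} [AddCommGroup V] [Module K V]
    [FiniteDimensional K V] (f : Module.End K V) (c : K)
    (h : IsNilpotent (f - algebraMap K (Module.End K V) c)) :
    f.charpoly = (X - C c) ^ Module.finrank K V := by
  have h1 : f.charpoly.comp (X + C c) = X ^ Module.finrank K V := by
    rw [← aux_charpoly_sub_algebraMap f c, h.charpoly_eq_X_pow_finrank]
  have h2 := congrArg (fun p => p.comp (X - C c)) h1
  simpa only [comp_assoc, add_comp, X_comp, C_comp, sub_add_cancel, comp_X, pow_comp]
    using h2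

lemma aux_roots_charpoly_of_isNilpotent_sub {V : Type*} [AddCommGroup V] [Module K V]
    [FiniteDimensional K V] (f : Module.End K V) (c : K)
    (h : IsNilpotent (f - algebraMap K (Module.End K V) c)) :
    f.charpoly.roots = Multiset.replicate (Module.finrank K V) c := by
  rw [aux_charpoly_of_isNilpotent_sub f c h, roots_pow, roots_X_sub_C,
    Multiset.nsmul_singleton]

end Shift

section Compl

variable {K : Type*} [Field K] {V : Type*} [AddCommGroup V] [Module K V]
  [FiniteDimensional K V]

lemma aux_charpoly_eq_mul_of_isCompl {p q : Submodule K V} (hpq : IsCompl p q)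
    (f : Module.End K V) (hp : ∀ x ∈ p, f x ∈ p) (hq : ∀ x ∈ q, f x ∈ q) :
    f.charpoly = (f.restrict hp).charpoly * (f.restrict hq).charpoly := by
  let F := f.restrict hp
  let G := f.restrict hq
  let ψ := F.prodMap G
  let e := Submodule.prodEquivOfIsCompl p q hpq
  let bp := Module.Free.chooseBasis K p
  let bq := Module.Free.chooseBasis K q
  let b := bp.prod bq
  have hψ : ψ = e.symm.conj f := by
    apply b.ext
    simp only [Basis.prod_apply, LinearMap.coe_inl, LinearMap.coe_inr,
      LinearMap.prodMap_apply, LinearEquiv.conj_apply, LinearEquiv.symm_symm,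
      Submodule.coe_prodEquivOfIsCompl, LinearMap.coe_comp, LinearEquiv.coe_coe,
      Function.comp_apply, LinearMap.coprod_apply, Submodule.coe_subtype, map_add,
      Sum.forall, Sum.elim_inl, map_zero, ZeroMemClass.coe_zero, add_zero,
      LinearEquiv.eq_symm_apply, and_self, Submodule.coe_prodEquivOfIsCompl',
      LinearMap.restrict_coe_apply, implies_true, Sum.elim_inr, zero_add,
      e, ψ, F, G, b]
  rw [← e.symm.charpoly_conj f, ← hψ, LinearMap.charpoly_prodMap]

end Compl

section Key

variable {K : Type u} [Field K] [IsAlgClosed K]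

lemma aux_key : ∀ (d : ℕ) (V : Type v) [AddCommGroup V] [Module K V]
    [FiniteDimensional K V], Module.finrank K V = d →
    ∀ A B : Module.End K V, Commute A B →
    ∃ l : List (K × K),
      A.charpoly.roots = ↑(l.map Prod.fst) ∧
      B.charpoly.roots = ↑(l.map Prod.snd) ∧
      (A * B).charpoly.roots = ↑(l.map fun x => x.1 * x.2) := by
  intro d
  induction d using Nat.strong_induction_on with
  | _ d ih =>
  intro V _ _ _ hd A B hAB
  rcases subsingleton_or_nontrivial V with hV | hV
  · have h0 : ∀ f : Module.End K V, f.charpoly = 1 := by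
      intro f
      apply (LinearMap.charpoly_monic f).natDegree_eq_zero.mp
      rw [LinearMap.charpoly_natDegree]
      exact Module.finrank_zero_of_subsingleton
    exact ⟨[], by simp [h0], by simp [h0], by simp [h0]⟩
  · set f : Bool → Module.End K V := fun i => bif i then A else B with hf
    have hcomm : ∀ i j, Commute (f i) (f j) := by
      rintro (_|_) (_|_)
      · exact Commute.refl _
      · exact hAB.symm
      · exact hAB
      · exact Commute.refl _
    have hTo : ∀ i j φ, MapsTo (f i) ((f j).maxGenEigenspace φ)
        ((f j).maxGenEigenspace φ) :=
      fun i j φ => Module.End.mapsTo_maxGenEigenspace_of_comm (hcomm j i) φ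
    have hsup : ⨆ χ : Bool → K, ⨅ i, (f i).maxGenEigenspace (χ i) = ⊤ :=
      Module.End.iSup_iInf_maxGenEigenspace_eq_top_of_iSup_maxGenEigenspace_eq_top_of_commute
        f (fun i j _ => hcomm i j) (fun i => Module.End.iSup_maxGenEigenspace_eq_top (f i))
    have hind := Module.End.independent_iInf_maxGenEigenspace_of_forall_mapsTo f hTo
    obtain ⟨χ, hχ⟩ : ∃ χ : Bool → K, (⨅ i, (f i).maxGenEigenspace (χ i)) ≠ ⊥ := by
      by_contra h
      push_neg at h
      have : (⊤ : Submodule K V) = ⊥ := by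
        rw [← hsup]; exact iSup_eq_bot.mpr h
      exact top_ne_bot this
    set P : (Bool → K) → Submodule K V := fun ψ => ⨅ i, (f i).maxGenEigenspace (ψ i) with hPdef
    set U : Submodule K V := P χ with hU
    set U' : Submodule K V := ⨆ ψ ∈ {ψ : Bool → K | ψ ≠ χ}, P ψ with hU'
    have hMapsPiece : ∀ (i : Bool) (ψ : Bool → K), MapsTo (f i) ↑(P ψ) ↑(P ψ) := by
      intro i ψ x hx
      rw [hPdef] at hx ⊢
      rw [SetLike.mem_coe, Submodule.mem_iInf] at hx ⊢
      exact fun j => hTo i j (ψ j) (hx j)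
    have hMapsU : ∀ i : Bool, ∀ x ∈ U, f i x ∈ U := fun i x hx => hMapsPiece i χ hx
    have hMapsU' : ∀ i : Bool, ∀ x ∈ U', f i x ∈ U' := by
      intro i
      have hle : U'.map (f i) ≤ U' := by
        rw [hU', Submodule.map_iSup]
        refine iSup_le fun ψ => ?_
        rw [Submodule.map_iSup]
        refine iSup_le fun hψ => ?_
        refine le_trans ?_ (le_biSup (fun ψ => P ψ) hψ)
        exact Submodule.map_le_iff_le_comap.mpr fun x hx => hMapsPiece i ψ hx
      exact fun x hx => hle (Submodule.mem_map_of_mem hx)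
    have hcompl : IsCompl U U' := by
      constructor
      · exact hind.disjoint_biSup (by simp)
      · have hsup' : ⨆ ψ : Bool → K, P ψ = ⊤ := hsup
        rw [codisjoint_iff, eq_top_iff, ← hsup']
        refine iSup_le fun ψ => ?_
        rcases eq_or_ne ψ χ with rfl | hψ
        · exact le_sup_left
        · exact le_trans (le_biSup (fun ψ => P ψ) hψ) le_sup_right
    -- nilpotency on U
    have hnil : ∀ i : Bool, IsNilpotent
        ((f i).restrict (hMapsU i) - algebraMap K (Module.End K U) (χ i)) := by
      intro i
      set g : Module.End K V := f i - algebraMap K (Module.End K V) (χ i) with hg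
      have hgU : ∀ x ∈ U, g x ∈ U := by
        intro x hx
        have h1 : g x = f i x - χ i • x := by
          simp [hg, Module.algebraMap_end_apply]
        rw [h1]
        exact U.sub_mem (hMapsU i x hx) (U.smul_mem _ hx)
      have heq : (f i).restrict (hMapsU i) - algebraMap K (Module.End K U) (χ i)
          = g.restrict hgU := by
        ext x
        simp [hg, LinearMap.restrict_apply, Module.algebraMap_end_apply]
      rw [heq]
      apply ((LinearMap.charpoly_nilpotent_tfae (g.restrict hgU)).out 0 2).mpr
      rintro ⟨x, hx⟩
      have hx' : x ∈ (f i).maxGenEigenspace (χ i) := by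
        rw [hU, hPdef, Submodule.mem_iInf] at hx
        exact hx i
      obtain ⟨k, hk⟩ := (Module.End.mem_maxGenEigenspace _ _ _).mp hx'
      refine ⟨k, ?_⟩
      rw [Module.End.pow_restrict]
      apply Subtype.ext
      rw [LinearMap.restrict_coe_apply]
      simpa [hg, Module.algebraMap_end_eq_smul_id, Module.End.one_eq_id] using hk
    have hrootsU : ∀ i : Bool, ((f i).restrict (hMapsU i)).charpoly.roots
        = Multiset.replicate (Module.finrank K U) (χ i) :=
      fun i => aux_roots_charpoly_of_isNilpotent_sub _ _ (hnil i)
    -- product on U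
    set A₁ := (f true).restrict (hMapsU true) with hA₁
    set B₁ := (f false).restrict (hMapsU false) with hB₁
    have hABU : ∀ x ∈ U, (A * B) x ∈ U := fun x hx =>
      hMapsU true _ (hMapsU false x hx)
    have hP : (A * B).restrict hABU = A₁ * B₁ := rfl
    have hAB₁ : Commute A₁ B₁ :=
      LinearMap.restrict_commute (hcomm true false) _ _
    have hnilP : IsNilpotent (A₁ * B₁ - algebraMap K (Module.End K U) (χ true * χ false)) := by
      set N₁ := A₁ - algebraMap K (Module.End K U) (χ true) with hN₁
      set N₂ := B₁ - algebraMap K (Module.End K U) (χ false) with hN₂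
      have key : A₁ * B₁ - algebraMap K (Module.End K U) (χ true * χ false)
          = A₁ * N₂ + N₁ * algebraMap K (Module.End K U) (χ false) := by
        rw [hN₁, hN₂, map_mul, mul_sub, sub_mul]
        abel
      rw [key]
      have c1 : Commute A₁ N₂ :=
        hAB₁.sub_right (Algebra.commute_algebraMap_right _ _)
      have c2 : Commute (A₁ * N₂) (N₁ * algebraMap K (Module.End K U) (χ false)) := by
        have cA₁N₁ : Commute A₁ N₁ :=
          (Commute.refl A₁).sub_right (Algebra.commute_algebraMap_right _ _)
        have cN₂N₁ : Commute N₂ N₁ :=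
          (hAB₁.symm.sub_left (Algebra.commute_algebraMap_left _ _)).sub_right
            (Algebra.commute_algebraMap_right _ _)
        exact (cA₁N₁.mul_left cN₂N₁).mul_right
          ((Algebra.commute_algebraMap_right _ _).mul_left
            (Algebra.commute_algebraMap_right _ _))
      exact c2.isNilpotent_add (c1.isNilpotent_mul_left (hnil false))
        ((Algebra.commute_algebraMap_right _ _).isNilpotent_mul_right (hnil true))
    have hrootsP : (A₁ * B₁).charpoly.roots
        = Multiset.replicate (Module.finrank K U) (χ true * χ false) :=
      aux_roots_charpoly_of_isNilpotent_sub _ _ hnilP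
    -- induction on U'
    have hUpos : 0 < Module.finrank K U := by
      rw [Module.finrank_pos_iff]
      exact Submodule.nontrivial_iff_ne_bot.mpr hχ
    have hadd := Submodule.finrank_add_eq_of_isCompl hcompl
    have hltd : Module.finrank K U' < d := by omega
    obtain ⟨l', h1', h2', h3'⟩ := ih (Module.finrank K U') hltd U' rfl
      ((f true).restrict (hMapsU' true)) ((f false).restrict (hMapsU' false))
      (LinearMap.restrict_commute (hcomm true false) _ _)
    have hABU' : ∀ x ∈ U', (A * B) x ∈ U' := fun x hx =>
      hMapsU' true _ (hMapsU' false x hx)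
    have hP' : (A * B).restrict hABU'
        = ((f true).restrict (hMapsU' true)) * ((f false).restrict (hMapsU' false)) := rfl
    refine ⟨List.replicate (Module.finrank K U) (χ true, χ false) ++ l', ?_, ?_, ?_⟩
    · rw [List.map_append, List.map_replicate, ← Multiset.coe_add,
        aux_charpoly_eq_mul_of_isCompl hcompl A (hMapsU true) (hMapsU' true),
        Polynomial.roots_mul (mul_ne_zero (LinearMap.charpoly_monic _).ne_zero
          (LinearMap.charpoly_monic _).ne_zero),
        Multiset.coe_replicate]
      exact congrArg₂ (· + ·) (hrootsU true) h1'
    · rw [List.map_append, List.map_replicate, ← Multiset.coe_add,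
        aux_charpoly_eq_mul_of_isCompl hcompl B (hMapsU false) (hMapsU' false),
        Polynomial.roots_mul (mul_ne_zero (LinearMap.charpoly_monic _).ne_zero
          (LinearMap.charpoly_monic _).ne_zero),
        Multiset.coe_replicate]
      exact congrArg₂ (· + ·) (hrootsU false) h2'
    · rw [List.map_append, List.map_replicate, ← Multiset.coe_add,
        aux_charpoly_eq_mul_of_isCompl hcompl (A * B) hABU hABU',
        Polynomial.roots_mul (mul_ne_zero (LinearMap.charpoly_monic _).ne_zero
          (LinearMap.charpoly_monic _).ne_zero),
        Multiset.coe_replicate, hP, hP']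
      exact congrArg₂ (· + ·) hrootsP h3'

end Key

/-- Frobenius-type corollary: if `T, S` are commuting endomorphisms of an
`n`-dimensional vector space over a field `𝕂`, then the eigenvalues of `T`, `S`
and `T ∘ S` in the algebraic closure of `𝕂` (the roots of the characteristic
polynomials, counted with multiplicity) can be arranged so that
`λᵢ(TS) = λᵢ(T) · λᵢ(S)` for all `i`. -/
theorem eigenvalues_of_commuting_product {𝕂 : Type*} [Field 𝕂]
    {V : Type*} [AddCommGroup V] [Module 𝕂 V] [FiniteDimensional 𝕂 V]
    (n : ℕ) (hn : Module.finrank 𝕂 V = n)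
    (T S : V →ₗ[𝕂] V) (hTS : T ∘ₗ S = S ∘ₗ T) :
    ∃ lT lS lTS : Fin n → AlgebraicClosure 𝕂,
      (T.charpoly.aroots (AlgebraicClosure 𝕂) = ↑(List.ofFn lT)) ∧
      (S.charpoly.aroots (AlgebraicClosure 𝕂) = ↑(List.ofFn lS)) ∧
      ((T ∘ₗ S).charpoly.aroots (AlgebraicClosure 𝕂) = ↑(List.ofFn lTS)) ∧
      ∀ i, lTS i = lT i * lS i := by
  set K := AlgebraicClosure 𝕂
  set A := T.baseChange K with hA
  set B := S.baseChange K with hB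
  have hfr : Module.finrank K (K ⊗[𝕂] V) = n := by
    rw [Module.finrank_baseChange, hn]
  have hcomm : Commute A B := by
    have h1 : A * B = (T ∘ₗ S).baseChange K := by
      rw [← LinearMap.baseChange_mul]; rfl
    have h2 : B * A = (S ∘ₗ T).baseChange K := by
      rw [← LinearMap.baseChange_mul]; rfl
    rw [Commute, SemiconjBy, h1, h2, hTS]
  obtain ⟨l, h1, h2, h3⟩ := aux_key n (K ⊗[𝕂] V) hfr A B hcomm
  have hTa : T.charpoly.aroots K = A.charpoly.roots := by
    rw [aroots_def, hA, LinearMap.charpoly_baseChange]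
  have hSa : S.charpoly.aroots K = B.charpoly.roots := by
    rw [aroots_def, hB, LinearMap.charpoly_baseChange]
  have hTSa : (T ∘ₗ S).charpoly.aroots K = (A * B).charpoly.roots := by
    rw [aroots_def, ← LinearMap.charpoly_baseChange]
    congr 1
    rw [← LinearMap.baseChange_mul]; rfl
  have hlen : l.length = n := by
    have hc : (T.charpoly.aroots K).card = n := by
      rw [← hn, ← LinearMap.charpoly_natDegree (f := T)]
      have hmap : (T.charpoly.map (algebraMap 𝕂 K)).natDegree = T.charpoly.natDegree :=
        natDegree_map_eq_of_injective (algebraMap 𝕂 K).injective _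
      rw [← hmap, aroots_def]
      exact (Polynomial.splits_iff_card_roots.mp (IsAlgClosed.splits _))
    rw [hTa, h1] at hc
    simpa using hc
  subst hlen
  refine ⟨fun i => (l.get i).1, fun i => (l.get i).2, fun i => (l.get i).1 * (l.get i).2,
    ?_, ?_, ?_, fun i => rfl⟩
  · rw [hTa, h1]
    congr 1
    rw [← List.ofFn_get l, List.map_ofFn, List.ofFn_get]
    rfl
  · rw [hSa, h2]
    congr 1
    rw [← List.ofFn_get l, List.map_ofFn, List.ofFn_get]
    rfl
  · rw [hTSa, h3]
    congr 1
    rw [← List.ofFn_get l, List.map_ofFn, List.ofFn_get]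
    rfl
end

section
/- Let G be a normal subgroup of GL(d,ℝ). If Λ_{G,z₀} has nonempty interior in ℝ^d for some nonzero z₀ ∈ ℝ^d, then Λ_{G,z} has nonempty interior for every nonzero z ∈ ℝ^d. -/
open Matrix

lemma exists_linearEquiv_map_eq {K V : Type*} [Field K] [AddCommGroup V] [Module K V]
    [FiniteDimensional K V] {v w : V} (hv : v ≠ 0) (hw : w ≠ 0) :
    ∃ e : V ≃ₗ[K] V, e v = w := by
  have hv' := (linearIndepOn_singleton_iff K (v := id) (i := v)).2 hv
  have hw' := (linearIndepOn_singleton_iff K (v := id) (i := w)).2 hw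
  let B := Module.Basis.extend hv'
  let B' := Module.Basis.extend hw'
  have hvB : v ∈ hv'.extend (Set.subset_univ _) := hv'.subset_extend _ rfl
  have hwB : w ∈ hw'.extend (Set.subset_univ _) := hw'.subset_extend _ rfl
  have hcard : Fintype.card (hv'.extend (Set.subset_univ _)) =
      Fintype.card (hw'.extend (Set.subset_univ _)) := by
    rw [← Module.finrank_eq_card_basis B, ← Module.finrank_eq_card_basis B']
  classical
  let e0 := Fintype.equivOfCardEq hcard
  let e := e0.trans (Equiv.swap (e0 ⟨v, hvB⟩) ⟨w, hwB⟩)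
  refine ⟨B.equiv B' e, ?_⟩
  have h1 : B ⟨v, hvB⟩ = v := Module.Basis.extend_apply_self _ _
  have h2 : B' ⟨w, hwB⟩ = w := Module.Basis.extend_apply_self _ _
  calc B.equiv B' e v = B.equiv B' e (B ⟨v, hvB⟩) := by rw [h1]
    _ = B' (e ⟨v, hvB⟩) := Module.Basis.equiv_apply _ _ _ _
    _ = w := by simp [e, h2]

/-- If `G` is a normal subgroup of `GL(d, ℝ)` and `Λ_{G,z₀}` has nonempty interior for
some nonzero `z₀`, then `Λ_{G,z}` has nonempty interior for every nonzero `z`. -/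
theorem lambda_nonempty_interior_of_normal {d : ℕ} (G : Subgroup (GL (Fin d) ℝ))
    (hG : G.Normal) (z₀ : Fin d → ℝ) (hz₀ : z₀ ≠ 0)
    (h : (interior {x : Fin d → ℝ | ∃ P ∈ G, ∃ Q ∈ G,
        x = (P : Matrix (Fin d) (Fin d) ℝ) *ᵥ z₀ -
          (Q : Matrix (Fin d) (Fin d) ℝ) *ᵥ z₀}).Nonempty) :
    ∀ z : Fin d → ℝ, z ≠ 0 →
      (interior {x : Fin d → ℝ | ∃ P ∈ G, ∃ Q ∈ G,
        x = (P : Matrix (Fin d) (Fin d) ℝ) *ᵥ z -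
          (Q : Matrix (Fin d) (Fin d) ℝ) *ᵥ z}).Nonempty := by
  intro z hz
  obtain ⟨e, he⟩ := exists_linearEquiv_map_eq (K := ℝ) hz hz₀
  -- build the GL element A with A *ᵥ z = z₀ and ↑A⁻¹ *ᵥ x = e.symm x
  set A : GL (Fin d) ℝ :=
    ⟨LinearMap.toMatrix' e.toLinearMap, LinearMap.toMatrix' e.symm.toLinearMap,
      by rw [← LinearMap.toMatrix'_comp]; simp,
      by rw [← LinearMap.toMatrix'_comp]; simp⟩ with hAdef
  have hA : ∀ x, (A : Matrix (Fin d) (Fin d) ℝ) *ᵥ x = e x := by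
    intro x
    show LinearMap.toMatrix' e.toLinearMap *ᵥ x = e x
    rw [← Matrix.toLin'_apply, Matrix.toLin'_toMatrix']; rfl
  have hAinv : ∀ x, ((A⁻¹ : GL (Fin d) ℝ) : Matrix (Fin d) (Fin d) ℝ) *ᵥ x = e.symm x := by
    intro x
    show LinearMap.toMatrix' e.symm.toLinearMap *ᵥ x = e.symm x
    rw [← Matrix.toLin'_apply, Matrix.toLin'_toMatrix']; rfl
  set S₀ := {x : Fin d → ℝ | ∃ P ∈ G, ∃ Q ∈ G,
      x = (P : Matrix (Fin d) (Fin d) ℝ) *ᵥ z₀ - (Q : Matrix (Fin d) (Fin d) ℝ) *ᵥ z₀}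
  set S := {x : Fin d → ℝ | ∃ P ∈ G, ∃ Q ∈ G,
      x = (P : Matrix (Fin d) (Fin d) ℝ) *ᵥ z - (Q : Matrix (Fin d) (Fin d) ℝ) *ᵥ z}
  have hsub : e.symm '' S₀ ⊆ S := by
    rintro _ ⟨x, ⟨P, hP, Q, hQ, rfl⟩, rfl⟩
    refine ⟨A⁻¹ * P * A, ?_, A⁻¹ * Q * A, ?_, ?_⟩
    · have := hG.conj_mem P hP A⁻¹; simpa using this
    · have := hG.conj_mem Q hQ A⁻¹; simpa using this
    · have key : ∀ R : GL (Fin d) ℝ,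
          ((A⁻¹ * R * A : GL (Fin d) ℝ) : Matrix (Fin d) (Fin d) ℝ) *ᵥ z
            = e.symm ((R : Matrix (Fin d) (Fin d) ℝ) *ᵥ z₀) := by
        intro R
        have : ((A⁻¹ * R * A : GL (Fin d) ℝ) : Matrix (Fin d) (Fin d) ℝ)
            = ((A⁻¹ : GL (Fin d) ℝ) : Matrix (Fin d) (Fin d) ℝ) *
              ((R : Matrix (Fin d) (Fin d) ℝ) * (A : Matrix (Fin d) (Fin d) ℝ)) := by
          simp [Units.val_mul, mul_assoc]
        rw [this, ← Matrix.mulVec_mulVec, ← Matrix.mulVec_mulVec, hA z, he, hAinv]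
      rw [map_sub, key P, key Q]
  have hhomeo : interior (e.symm '' S₀) = e.symm '' interior S₀ := by
    have : Continuous (e.symm : (Fin d → ℝ) → (Fin d → ℝ)) ∧
        Continuous (e : (Fin d → ℝ) → (Fin d → ℝ)) :=
      ⟨e.symm.toLinearMap.continuous_of_finiteDimensional,
        e.toLinearMap.continuous_of_finiteDimensional⟩
    exact ((Homeomorph.mk e.symm.toEquiv this.1 this.2).image_interior S₀).symm
  obtain ⟨y, hy⟩ := h
  exact ⟨e.symm y, interior_mono hsub (hhomeo ▸ Set.mem_image_of_mem _ hy)⟩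
end

section
/- Let V be a finite-dimensional vector subspace of C(ℝ^d) with τ_h(V) ⊆ V for all h ∈ ℝ^d, and let G be a finite subgroup of GL(d,ℝ). Then there exists a finite-dimensional vector subspace W of C(ℝ^d) such that V ⊆ W, τ_h(W) ⊆ W for all h ∈ ℝ^d, and O_P(W) ⊆ W for all P ∈ G. -/
open Matrix

/-- Composition with a matrix, as a linear map on function space. -/
def compL {d : ℕ} (P : Matrix (Fin d) (Fin d) ℝ) :
    ((Fin d → ℝ) → ℝ) →ₗ[ℝ] ((Fin d → ℝ) → ℝ) where
  toFun g := fun x => g (P *ᵥ x)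
  map_add' _ _ := rfl
  map_smul' _ _ := rfl

/-- Translation, as a linear map on function space. -/
def transL {d : ℕ} (h : Fin d → ℝ) :
    ((Fin d → ℝ) → ℝ) →ₗ[ℝ] ((Fin d → ℝ) → ℝ) where
  toFun g := fun x => g (x + h)
  map_add' _ _ := rfl
  map_smul' _ _ := rfl

/-- If `V` is a finite-dimensional translation-invariant space of continuous functions
on `ℝ^d` and `G ⊆ GL(d, ℝ)` is a finite subgroup, then there is a finite-dimensional
space `W` of continuous functions containing `V` that is invariant under all
translations and under composition with all elements of `G`. -/
theorem enlarge_to_G_invariant {d : ℕ}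
    (V : Submodule ℝ ((Fin d → ℝ) → ℝ))
    (hVc : ∀ g ∈ V, Continuous g)
    (hVfin : FiniteDimensional ℝ V)
    (hτ : ∀ h : Fin d → ℝ, ∀ g ∈ V, (fun x => g (x + h)) ∈ V)
    (G : Subgroup (GL (Fin d) ℝ)) (hG : (G : Set (GL (Fin d) ℝ)).Finite) :
    ∃ W : Submodule ℝ ((Fin d → ℝ) → ℝ),
      (∀ g ∈ W, Continuous g) ∧ FiniteDimensional ℝ W ∧ V ≤ W ∧
      (∀ h : Fin d → ℝ, ∀ g ∈ W, (fun x => g (x + h)) ∈ W) ∧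
      (∀ P ∈ G, ∀ g ∈ W, (fun x => g ((P : Matrix (Fin d) (Fin d) ℝ) *ᵥ x)) ∈ W) := by
  haveI : Finite (G : Set (GL (Fin d) ℝ)) := hG.to_subtype
  set W : Submodule ℝ ((Fin d → ℝ) → ℝ) :=
    ⨆ P : (G : Set (GL (Fin d) ℝ)), V.map (compL ((P : GL (Fin d) ℝ) : Matrix (Fin d) (Fin d) ℝ))
    with hW
  refine ⟨W, ?_, ?_, ?_, ?_, ?_⟩
  · -- continuity
    let C : Submodule ℝ ((Fin d → ℝ) → ℝ) :=
      { carrier := {g | Continuous g}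
        add_mem' := fun ha hb => ha.add hb
        zero_mem' := continuous_const
        smul_mem' := fun c _ hg => hg.const_smul c }
    have : W ≤ C := by
      refine iSup_le fun P => ?_
      rintro _ ⟨g, hg, rfl⟩
      exact (hVc g hg).comp (Matrix.mulVecLin ((P : GL (Fin d) ℝ) : Matrix (Fin d) (Fin d) ℝ)).continuous_of_finiteDimensional
    exact fun g hg => this hg
  · -- finite dimensional
    exact Submodule.finiteDimensional_iSup _
  · -- V ≤ W
    have h1 : V.map (compL (((1 : GL (Fin d) ℝ) : GL (Fin d) ℝ) :
        Matrix (Fin d) (Fin d) ℝ)) ≤ W :=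
      le_iSup (fun P : (G : Set (GL (Fin d) ℝ)) =>
        V.map (compL ((P : GL (Fin d) ℝ) : Matrix (Fin d) (Fin d) ℝ)))
        ⟨1, G.one_mem⟩
    intro g hg
    have : compL (((1 : GL (Fin d) ℝ) : Matrix (Fin d) (Fin d) ℝ)) g = g := by
      funext x
      simp [compL, Matrix.one_mulVec]
    exact this ▸ h1 ⟨g, hg, rfl⟩
  · -- translation invariance
    intro h
    have : W ≤ W.comap (transL h) := by
      refine iSup_le fun P => ?_
      rintro _ ⟨g, hg, rfl⟩
      have key : transL h (compL ((P : GL (Fin d) ℝ) : Matrix (Fin d) (Fin d) ℝ) g)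
          = compL ((P : GL (Fin d) ℝ) : Matrix (Fin d) (Fin d) ℝ)
            (transL (((P : GL (Fin d) ℝ) : Matrix (Fin d) (Fin d) ℝ) *ᵥ h) g) := by
        funext x
        simp [transL, compL, Matrix.mulVec_add]
      simp only [Submodule.mem_comap, key]
      exact le_iSup (fun P : (G : Set (GL (Fin d) ℝ)) =>
        V.map (compL ((P : GL (Fin d) ℝ) : Matrix (Fin d) (Fin d) ℝ))) P
        ⟨_, hτ _ g hg, rfl⟩
    exact fun g hg => this hg
  · -- G invariance
    intro Q hQ
    have : W ≤ W.comap (compL ((Q : Matrix (Fin d) (Fin d) ℝ))) := by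
      refine iSup_le fun P => ?_
      rintro _ ⟨g, hg, rfl⟩
      have key : compL ((Q : Matrix (Fin d) (Fin d) ℝ))
          (compL ((P : GL (Fin d) ℝ) : Matrix (Fin d) (Fin d) ℝ) g)
          = compL ((((P : GL (Fin d) ℝ) * Q : GL (Fin d) ℝ)) :
              Matrix (Fin d) (Fin d) ℝ) g := by
        funext x
        simp [compL, Matrix.mulVec_mulVec]
      simp only [Submodule.mem_comap, key]
      exact le_iSup (fun P : (G : Set (GL (Fin d) ℝ)) =>
        V.map (compL ((P : GL (Fin d) ℝ) : Matrix (Fin d) (Fin d) ℝ)))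
        ⟨(P : GL (Fin d) ℝ) * Q, G.mul_mem P.2 hQ⟩ ⟨g, hg, rfl⟩
    exact fun g hg => this hg
end

section
/- Let G = O(1,1) be the group of 2×2 real matrices A satisfying Aᵀ I_{1,1} A = I_{1,1}, where I_{1,1} = diag(1,−1), and let e₁ = (1,0)ᵀ ∈ ℝ². Then Λ_{G,e₁} = {Pe₁ − Qe₁ : P,Q ∈ G} has nonempty interior in ℝ². -/
open Matrix

/-- Solvability of the hyperbolic sum system. -/
lemma exists_hyp_pair (x y : ℝ) (hx : 3 < x) (hy : |y| < 1) :
    ∃ a b c d : ℝ, a ^ 2 - b ^ 2 = 1 ∧ c ^ 2 - d ^ 2 = 1 ∧ a + c = x ∧ b + d = y := by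
  have hy1 : -1 < y := (abs_lt.mp hy).1
  have hy2 : y < 1 := (abs_lt.mp hy).2
  set p : ℝ := x + y with hp
  set q : ℝ := x - y with hq
  have hp0 : 0 < p := by simp only [hp]; linarith
  have hq0 : 0 < q := by simp only [hq]; linarith
  have hpq : 4 < p * q := by nlinarith
  set D : ℝ := p ^ 2 - 4 * p / q with hD
  have hD0 : 0 < D := by
    rw [hD]
    rw [sub_pos, div_lt_iff₀ hq0]
    nlinarith
  have hsq : Real.sqrt D ^ 2 = D := Real.sq_sqrt hD0.le
  have h4 : 0 < 4 * p / q := by positivity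
  have hsle : Real.sqrt D < p := by
    by_contra h
    push_neg at h
    have h2 : p ^ 2 ≤ Real.sqrt D ^ 2 := by nlinarith [Real.sqrt_nonneg D]
    rw [hsq, hD] at h2
    linarith
  set u : ℝ := (p + Real.sqrt D) / 2 with hu
  set v : ℝ := (p - Real.sqrt D) / 2 with hv
  have hu0 : 0 < u := by rw [hu]; have := Real.sqrt_nonneg D; linarith
  have hv0 : 0 < v := by rw [hv]; linarith
  have hkey : (p + Real.sqrt D) * (p - Real.sqrt D) = 4 * p / q := by
    linear_combination -hsq
  have huv : u * v = p / q := by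
    rw [hu, hv, div_mul_div_comm, hkey]; ring
  have husum : u + v = p := by rw [hu, hv]; ring
  refine ⟨(u + 1/u)/2, (u - 1/u)/2, (v + 1/v)/2, (v - 1/v)/2, ?_, ?_, ?_, ?_⟩
  · field_simp; ring
  · field_simp; ring
  · have : (u + 1/u)/2 + (v + 1/v)/2 = (u + v)/2 + (u + v)/(2*(u*v)) := by
      field_simp; ring
    rw [this, husum, huv]
    have e : p / (2 * (p / q)) = q / 2 := by
      rw [div_eq_div_iff (by positivity) (by norm_num : (2:ℝ) ≠ 0)]
      field_simp
    rw [e]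
    simp only [hp, hq]; ring
  · have : (u - 1/u)/2 + (v - 1/v)/2 = (u + v)/2 - (u + v)/(2*(u*v)) := by
      field_simp; ring
    rw [this, husum, huv]
    have e : p / (2 * (p / q)) = q / 2 := by
      rw [div_eq_div_iff (by positivity) (by norm_num : (2:ℝ) ≠ 0)]
      field_simp
    rw [e]
    simp only [hp, hq]; ring

/-- For `G = O(1,1)` and `e₁ = (1,0)ᵀ`, the set `Λ_{G,e₁} = {P e₁ - Q e₁ : P, Q ∈ G}`
has nonempty interior in `ℝ²`. -/
theorem O11_lambda_nonempty_interior :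
    (interior {x : Fin 2 → ℝ | ∃ A B : Matrix (Fin 2) (Fin 2) ℝ,
      Aᵀ * Matrix.diagonal ![(1 : ℝ), -1] * A = Matrix.diagonal ![(1 : ℝ), -1] ∧
      Bᵀ * Matrix.diagonal ![(1 : ℝ), -1] * B = Matrix.diagonal ![(1 : ℝ), -1] ∧
      x = A *ᵥ ![(1 : ℝ), 0] - B *ᵥ ![(1 : ℝ), 0]}).Nonempty := by
  set S := {x : Fin 2 → ℝ | ∃ A B : Matrix (Fin 2) (Fin 2) ℝ,
      Aᵀ * Matrix.diagonal ![(1 : ℝ), -1] * A = Matrix.diagonal ![(1 : ℝ), -1] ∧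
      Bᵀ * Matrix.diagonal ![(1 : ℝ), -1] * B = Matrix.diagonal ![(1 : ℝ), -1] ∧
      x = A *ᵥ ![(1 : ℝ), 0] - B *ᵥ ![(1 : ℝ), 0]} with hS
  set U : Set (Fin 2 → ℝ) := {x | 3 < x 0 ∧ |x 1| < 1} with hU
  have hUopen : IsOpen U := by
    have h1 : IsOpen {x : Fin 2 → ℝ | 3 < x 0} :=
      isOpen_lt continuous_const (continuous_apply 0)
    have h2 : IsOpen {x : Fin 2 → ℝ | |x 1| < 1} :=
      isOpen_lt ((continuous_apply 1).abs) continuous_const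
    exact h1.inter h2
  have hsub : U ⊆ S := by
    rintro x ⟨hx0, hx1⟩
    obtain ⟨a, b, c, d, hab, hcd, hac, hbd⟩ := exists_hyp_pair (x 0) (x 1) hx0 hx1
    refine ⟨!![a, b; b, a], !![-c, d; -d, c], ?_, ?_, ?_⟩
    · ext i j
      fin_cases i <;> fin_cases j <;>
        simp [Matrix.mul_apply, Fin.sum_univ_two, Matrix.diagonal, Matrix.transpose] <;>
        nlinarith [hab]
    · ext i j
      fin_cases i <;> fin_cases j <;>
        simp [Matrix.mul_apply, Fin.sum_univ_two, Matrix.diagonal, Matrix.transpose] <;>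
        nlinarith [hcd]
    · funext i
      fin_cases i <;>
        simp [Matrix.mulVec, dotProduct, Fin.sum_univ_two] <;> linarith
  have hmem : (![4, 0] : Fin 2 → ℝ) ∈ U := by
    constructor <;> norm_num
  exact ⟨![4, 0], interior_maximal hsub hUopen hmem⟩
end

section
/- The group O(1,1) of 2×2 real matrices A with Aᵀ I_{1,1} A = I_{1,1}, where I_{1,1} = diag(1,−1), equals the set of matrices of the form [[a, εc],[c, εa]] with a,c ∈ ℝ, a² − c² = 1, and ε = ±1. -/
open Matrix

lemma diag_fin_two : Matrix.diagonal ![(1 : ℝ), -1] = !![1, 0; 0, -1] := by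
  ext i j
  fin_cases i <;> fin_cases j <;> simp [Matrix.diagonal]

lemma transpose_fin_two' (a b c d : ℝ) : (!![a, b; c, d])ᵀ = !![a, c; b, d] := by
  ext i j
  fin_cases i <;> fin_cases j <;> rfl

/-- The group `O(1,1)` of `2×2` real matrices `A` with `Aᵀ I_{1,1} A = I_{1,1}`,
where `I_{1,1} = diag(1,-1)`, equals the set of matrices `[[a, εc],[c, εa]]` with
`a² - c² = 1` and `ε = ±1`. -/
theorem O11_characterization :
    {A : Matrix (Fin 2) (Fin 2) ℝ |
        Aᵀ * Matrix.diagonal ![(1 : ℝ), -1] * A = Matrix.diagonal ![(1 : ℝ), -1]} =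
    {A : Matrix (Fin 2) (Fin 2) ℝ | ∃ a c ε : ℝ, (ε = 1 ∨ ε = -1) ∧
        a ^ 2 - c ^ 2 = 1 ∧ A = !![a, ε * c; c, ε * a]} := by
  ext A
  simp only [Set.mem_setOf_eq]
  constructor
  · intro h
    rw [Matrix.eta_fin_two A] at h
    set a := A 0 0
    set b := A 0 1
    set c := A 1 0
    set d := A 1 1
    rw [diag_fin_two, transpose_fin_two', Matrix.mul_fin_two, Matrix.mul_fin_two] at h
    have h00 := congrFun (congrFun h 0) 0
    have h01 := congrFun (congrFun h 0) 1
    have h11 := congrFun (congrFun h 1) 1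
    simp [Matrix.cons_val_zero, Matrix.cons_val_one] at h00 h01 h11
    have ha : a ≠ 0 := by
      intro h0
      rw [h0] at h00
      nlinarith [mul_self_nonneg c]
    have hd2 : d * d = a * a := by
      linear_combination (-(d*d)) * h00 + (-(a*a)) * h11 + (a*b + c*d) * h01
    have hA : A = !![a, b; c, d] := Matrix.eta_fin_two A
    rcases (mul_self_eq_mul_self_iff.mp hd2 : d = a ∨ d = -a) with hda | hda
    · refine ⟨a, c, 1, Or.inl rfl, by nlinarith, ?_⟩
      have hb : b = 1 * c := by
        have hba : b * a = (1 * c) * a := by linear_combination h01 + c * hda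
        exact mul_right_cancel₀ ha hba
      rw [hA, hb, hda]; norm_num
    · refine ⟨a, c, -1, Or.inr rfl, by nlinarith, ?_⟩
      have hb : b = -1 * c := by
        have hba : b * a = (-1 * c) * a := by linear_combination h01 + c * hda
        exact mul_right_cancel₀ ha hba
      rw [hA, hb, hda]; norm_num
  · rintro ⟨a, c, ε, hε, h1, rfl⟩
    rw [diag_fin_two, transpose_fin_two', Matrix.mul_fin_two, Matrix.mul_fin_two]
    rcases hε with rfl | rfl <;>
      · ext i j
        fin_cases i <;> fin_cases j <;> simp <;> nlinarith [h1]
end
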